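/- arXiv:2012.01161 — 2 statements merged into one kernel-verified Lean document; each statement's English description precedes it below -/
import Mathlib

section
/- For all real x with -π/2 < x < π/2 and all r > 0, the infinite product ∏_{n=1}^∞ (1 + 2(x² - ln²(2 cos x))/(r²n²) + (x² + ln²(2 cos x))²/(r⁴n⁴)) equals (r²/(2π²)) · (cosh(2πx/r) - cos(2π ln(2 cos x)/r)) / (x² + ln²(2 cos x)), provided x² + ln²(2 cos x) ≠ 0. -/
/-!
For `z = a + b i`, the factor `1 + 2 (a² - b²)/n² + (a² + b²)²/n⁴` is `|1 + z²/n²|²`. Taking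
`|·|²` of Euler's product `∏ (1 + z²/n²) = sinh (π z) / (π z)` and using
`|sinh (a + b i)|² = (cosh 2a - cos 2b) / 2` gives the case `r = 1`; the general case is the
substitution `z = (x + i log (2 cos x)) / r`.
-/

open Real

namespace Complex

theorem hasProd_one_add_sq_div_sq (z : ℂ) (hz : z ≠ 0) :
    HasProd (fun n : ℕ => 1 + z ^ 2 / (n + 1) ^ 2) (sinh (π * z) / (π * z)) := by
  have hterm : (fun n : ℕ => 1 + z ^ 2 / (n + 1) ^ 2) = fun n => 1 + sineTerm (z * I) n := by
    ext n
    simp only [sineTerm, mul_pow, I_sq]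
    ring
  have hvalue : sinh (π * z) / (π * z) = sin (π * (z * I)) / (π * (z * I)) := by
    rw [← mul_assoc, sin_mul_I, mul_div_mul_right _ _ I_ne_zero]
  rw [hterm, hvalue, (multipliable_sineTerm _).hasProd_iff_tendsto_nat]
  exact tendsto_euler_sin_prod' (mul_ne_zero hz I_ne_zero)

theorem normSq_sinh_add_mul_I (a b : ℝ) :
    normSq (sinh (a + b * I)) = (Real.cosh (2 * a) - Real.cos (2 * b)) / 2 := by
  apply ofReal_injective
  rw [← mul_conj, ← sinh_conj]
  have hconj : (starRingEnd ℂ) (a + b * I) = a - b * I := by simp [Complex.ext_iff]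
  have hprod : sinh (a + b * I) * sinh (a - b * I) = (cosh (2 * a) - cosh (2 * b * I)) / 2 := by
    rw [show (2 * a : ℂ) = a + b * I + (a - b * I) by ring,
      show (2 * b * I : ℂ) = a + b * I - (a - b * I) by ring]
    linear_combination (cosh_sub (a + b * I) (a - b * I) - cosh_add (a + b * I) (a - b * I)) / 2
  rw [hconj, hprod, cosh_mul_I]
  push_cast
  ring

theorem normSq_one_add_sq_div (a b c : ℝ) :
    normSq (1 + (a + b * I) ^ 2 / c) = 1 + 2 * (a ^ 2 - b ^ 2) / c + (a ^ 2 + b ^ 2) ^ 2 / c ^ 2 := by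
  rcases eq_or_ne c 0 with rfl | hc
  · simp
  rw [normSq_apply]
  simp only [pow_two, add_re, one_re, div_ofReal_re, mul_re, ofReal_re, I_re, mul_zero, ofReal_im,
    I_im, mul_one, sub_self, add_zero, add_im, mul_im, zero_add, one_im, div_ofReal_im]
  field_simp
  ring

end Complex

open Complex in
theorem Real.hasProd_cosh_sub_cos (a b : ℝ) (hab : a ^ 2 + b ^ 2 ≠ 0) :
    HasProd (fun n : ℕ => 1 + 2 * (a ^ 2 - b ^ 2) / (n + 1) ^ 2 + (a ^ 2 + b ^ 2) ^ 2 / (n + 1) ^ 4)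
      ((Real.cosh (2 * π * a) - Real.cos (2 * π * b)) / (2 * π ^ 2 * (a ^ 2 + b ^ 2))) := by
  have hz : (a + b * I : ℂ) ≠ 0 := by
    rw [← normSq_pos, normSq_add_mul_I]
    exact (add_nonneg (sq_nonneg a) (sq_nonneg b)).lt_of_ne' hab
  have h := (hasProd_one_add_sq_div_sq _ hz).map normSq continuous_normSq
  convert h using 1
  · ext n
    have := normSq_one_add_sq_div a b ((n + 1) ^ 2)
    push_cast [← pow_mul] at this
    exact this.symm
  · rw [map_div₀, show (π * (a + b * I) : ℂ) = (π * a : ℝ) + (π * b : ℝ) * I by push_cast; ring,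
      normSq_sinh_add_mul_I, normSq_add_mul_I]
    field_simp

theorem stmt_0_general (x r : ℝ) (hr : 0 < r)
    (hne : x^2 + (Real.log (2 * Real.cos x))^2 ≠ 0) :
    (∏' n : ℕ, (1 + 2 * (x^2 - (Real.log (2 * Real.cos x))^2) / (r^2 * (n+1)^2)
        + (x^2 + (Real.log (2 * Real.cos x))^2)^2 / (r^4 * (n+1)^4)))
      = (r^2 / (2 * π^2)) * (Real.cosh (2 * π * x / r) - Real.cos (2 * π * Real.log (2 * Real.cos x) / r))
        / (x^2 + (Real.log (2 * Real.cos x))^2) := by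
  set L := Real.log (2 * Real.cos x)
  have hscaled : (x / r) ^ 2 + (L / r) ^ 2 ≠ 0 := by
    rw [div_pow, div_pow, ← add_div]
    exact div_ne_zero hne (by positivity)
  convert (Real.hasProd_cosh_sub_cos _ _ hscaled).tprod_eq using 1
  · congr 1
    ext n
    field_simp
  · field_simp

theorem stmt_0 (x r : ℝ) (hx1 : -(π/2) < x) (hx2 : x < π/2) (hr : 0 < r)
    (hne : x^2 + (Real.log (2 * Real.cos x))^2 ≠ 0) :
    (∏' n : ℕ, (1 + 2 * (x^2 - (Real.log (2 * Real.cos x))^2) / (r^2 * (n+1)^2)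
        + (x^2 + (Real.log (2 * Real.cos x))^2)^2 / (r^4 * (n+1)^4)))
      = (r^2 / (2 * π^2)) * (Real.cosh (2 * π * x / r) - Real.cos (2 * π * Real.log (2 * Real.cos x) / r))
        / (x^2 + (Real.log (2 * Real.cos x))^2) :=
  stmt_0_general x r hr hne
end

section
/- For every real a ≠ 0, ∫_{-π/2}^{π/2} 1/(i(x) - a + ln(2 cos x)) dx = -π/a + π·e^a/(e^a - 1)·H(ln 2 - a), where H is the Heaviside step function (H(t)=1 for t>0, H(t)=0 for t<0), assuming a ≠ ln 2. -/
open Real Complex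

noncomputable def H (t : ℝ) : ℝ := if 0 < t then 1 else 0

/-!
Substituting `z = exp (2 x I)` maps `(-π/2, π/2)` onto the unit circle minus `-1`, and
`1 + z = 2 cos x · exp (x I)` turns the integrand into `f z = (log (1 + z) - a)⁻¹`, so the integral
is `π` times the mean of `f` over the unit circle. Since `log (1 + z) → ∞` at `z = -1`, `f` extends
continuously there, and its only singularity in the closed disc is a simple pole at
`w = exp a - 1`, which lies inside exactly when `a < log 2`. Without the pole the mean value
property gives `f 0 = -1/a`. With it, `f = G / (z - w)` where `G` is holomorphic with
`G w = 1 / (log (1 + ·))' w = exp a`, and the mean of `G / (z - w)` is `(G w - G 0) / w`.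
-/

open Filter Function Metric Set Topology Bornology

section DividedDifference

variable {E : Type*} [NormedAddCommGroup E] [NormedSpace ℂ E] [CompleteSpace E]
  {f : ℂ → E} {R : ℝ} {c w : ℂ} {s : Set ℂ}

theorem circleAverage_inv_sub_smul_of_differentiable_on_off_countable (hs : s.Countable)
    (h₁f : ContinuousOn f (closedBall c |R|)) (h₂f : ∀ z ∈ ball c |R| \ s, DifferentiableAt ℂ f z)
    (hw : w ∈ ball c |R|) (hwc : w ≠ c) :
    circleAverage (fun z ↦ (z - w)⁻¹ • f z) c R = (w - c)⁻¹ • (f w - f c) := by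
  -- `(z - w)⁻¹ = (w - c)⁻¹ * ((z - c) / (z - w) - 1)` reduces this to two mean value properties.
  have hsphere : ∀ z ∈ sphere c |R|, z - w ≠ 0 := by
    rintro z hz h
    rw [sub_eq_zero] at h
    subst h
    exact (mem_sphere.1 hz ▸ mem_ball.1 hw).false
  have hcont : ContinuousOn (fun z ↦ ((z - c) / (z - w)) • f z) (sphere c |R|) :=
    ((continuousOn_id.sub continuousOn_const).div (continuousOn_id.sub continuousOn_const)
      hsphere).smul (h₁f.mono sphere_subset_closedBall)
  rw [← circleAverage_sub_sub_inv_smul_of_differentiable_on_off_countable hs h₁f h₂f hw,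
    ← circleAverage_of_differentiable_on_off_countable hs h₁f h₂f,
    ← circleAverage_sub hcont.circleIntegrable'
      (h₁f.mono sphere_subset_closedBall).circleIntegrable',
    ← circleAverage_smul]
  refine circleAverage_congr_sphere fun z hz ↦ ?_
  have hzw := hsphere z hz
  have hwc' : w - c ≠ 0 := sub_ne_zero.2 hwc
  simp only [Pi.smul_apply, Pi.sub_apply]
  rw [smul_sub, smul_smul, ← sub_smul]
  congr 1
  field_simp
  ring

end DividedDifference

theorem HasDerivAt.continuousAt_update_sub_mul {𝕜 : Type*} [NontriviallyNormedField 𝕜]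
    [DecidableEq 𝕜] {φ f : 𝕜 → 𝕜} {φ' w : 𝕜} (hφ : HasDerivAt φ φ' w) (hw : φ w = 0) (hφ' : φ' ≠ 0)
    (hf : f =ᶠ[𝓝[≠] w] fun z ↦ (φ z)⁻¹) :
    ContinuousAt (update (fun z ↦ (z - w) * f z) w φ'⁻¹) w := by
  rw [continuousAt_update_same]
  refine ((hasDerivAt_iff_tendsto_slope.1 hφ).inv₀ hφ').congr' ?_
  filter_upwards [hf] with z hz
  rw [slope_def_field, hw, sub_zero, inv_div, div_eq_mul_inv, hz]

theorem Complex.tendsto_log_nhdsNE_zero_cobounded : Tendsto log (𝓝[≠] 0) (cobounded ℂ) := by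
  rw [← tendsto_norm_atTop_iff_cobounded]
  refine tendsto_atTop_mono (fun z ↦ ?_)
    (tendsto_neg_atBot_atTop.comp (Real.tendsto_log_nhdsGT_zero.comp tendsto_norm_nhdsNE_zero))
  calc -Real.log ‖z‖ ≤ |(log z).re| := by rw [log_re]; exact neg_le_abs _
    _ ≤ ‖log z‖ := abs_re_le_norm _

theorem one_add_mem_slitPlane_of_norm_le_one {z : ℂ} (hz : ‖z‖ ≤ 1) (hz1 : z ≠ -1) :
    1 + z ∈ slitPlane := by
  refine mem_slitPlane_iff.2 (Or.inl ?_)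
  rw [add_re, one_re]
  by_contra! h
  have hsq : z.re * z.re + z.im * z.im ≤ 1 := by
    rw [← normSq_apply, ← Complex.sq_norm]
    exact pow_le_one₀ (norm_nonneg z) hz
  exact hz1 (Complex.ext (by simp; nlinarith) (by simp; nlinarith))

theorem ne_neg_one_of_norm_lt_one {z : ℂ} (hz : ‖z‖ < 1) : z ≠ -1 := by
  rintro rfl
  simp at hz

theorem eq_exp_sub_one_of_log_one_add_eq {z a : ℂ} (hz : z ≠ -1) (h : log (1 + z) = a) :
    z = exp a - 1 := by
  rw [← h, Complex.exp_log]
  · ring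
  · rwa [Ne, add_eq_zero_iff_neg_eq, eq_comm]

theorem one_add_exp_two_mul_I (x : ℝ) :
    1 + exp (2 * x * I) = (2 * Real.cos x : ℝ) * exp (x * I) := by
  push_cast
  rw [Complex.cos, mul_div_cancel₀ _ two_ne_zero, add_mul, ← Complex.exp_add, ← Complex.exp_add]
  ring_nf
  rw [Complex.exp_zero, add_comm]

theorem log_one_add_exp_two_mul_I {x : ℝ} (hx : x ∈ Ioo (-(π / 2)) (π / 2)) :
    log (1 + exp (2 * x * I)) = Real.log (2 * Real.cos x) + x * I := by
  have hcos : 0 < Real.cos x := Real.cos_pos_of_mem_Ioo hx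
  rw [one_add_exp_two_mul_I, log_ofReal_mul (by positivity) (exp_ne_zero _), Complex.log_exp] <;>
    simp <;> linarith [hx.1, hx.2, Real.pi_pos]

theorem norm_exp_ofReal_sub_one (a : ℝ) : ‖exp (a : ℂ) - 1‖ = |Real.exp a - 1| := by
  rw [← ofReal_exp, ← ofReal_one, ← ofReal_sub, norm_real, Real.norm_eq_abs]

/-- The value `0` at `-1` is the continuous extension. -/
noncomputable def invLogOneAddSub (a : ℂ) : ℂ → ℂ :=
  update (fun z ↦ (log (1 + z) - a)⁻¹) (-1) 0

theorem invLogOneAddSub_eventuallyEq {a z : ℂ} (hz : z ≠ -1) :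
    invLogOneAddSub a =ᶠ[𝓝 z] fun z ↦ (log (1 + z) - a)⁻¹ := by
  filter_upwards [isOpen_compl_singleton.mem_nhds hz] with y hy
  exact update_of_ne hy _ _

theorem invLogOneAddSub_zero (a : ℂ) : invLogOneAddSub a 0 = -a⁻¹ := by
  simp [invLogOneAddSub]

theorem continuousAt_invLogOneAddSub_neg_one (a : ℂ) :
    ContinuousAt (invLogOneAddSub a) (-1) := by
  rw [invLogOneAddSub, continuousAt_update_same]
  have h1 : Tendsto (fun z : ℂ ↦ 1 + z) (𝓝[≠] (-1)) (𝓝[≠] 0) :=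
    (map_add_left_nhdsNE (c := 1) (a := -1)).le.trans_eq (by norm_num)
  exact tendsto_inv₀_cobounded.comp
    ((tendsto_sub_const_cobounded a).comp (tendsto_log_nhdsNE_zero_cobounded.comp h1))

theorem differentiableAt_invLogOneAddSub {a z : ℂ} (hz : ‖z‖ ≤ 1) (hz1 : z ≠ -1)
    (hza : z ≠ exp a - 1) : DifferentiableAt ℂ (invLogOneAddSub a) z := by
  refine DifferentiableAt.congr_of_eventuallyEq ?_ (invLogOneAddSub_eventuallyEq hz1)
  refine (((differentiableAt_log (one_add_mem_slitPlane_of_norm_le_one hz hz1)).comp z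
    (by fun_prop)).sub_const a).inv ?_
  exact sub_ne_zero.2 fun h ↦ hza (eq_exp_sub_one_of_log_one_add_eq hz1 h)

theorem continuousAt_invLogOneAddSub {a z : ℂ} (hz : ‖z‖ ≤ 1) (hza : z ≠ exp a - 1) :
    ContinuousAt (invLogOneAddSub a) z := by
  rcases eq_or_ne z (-1) with rfl | hz1
  · exact continuousAt_invLogOneAddSub_neg_one a
  · exact (differentiableAt_invLogOneAddSub hz hz1 hza).continuousAt

theorem intervalIntegral_eq_pi_mul_circleAverage_invLogOneAddSub (a : ℂ) :
    ∫ x in (-(π / 2))..(π / 2), (1 : ℂ) / (I * x - a + Real.log (2 * Real.cos x))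
      = π * circleAverage (invLogOneAddSub a) 0 1 := by
  have hsubst : ∀ x ∈ Ioo (-(π / 2)) (π / 2),
      (1 : ℂ) / (I * x - a + Real.log (2 * Real.cos x))
        = invLogOneAddSub a (circleMap 0 1 (2 * x)) := by
    intro x hx
    have hne : exp (2 * x * I) ≠ -1 := by
      intro h
      have h0 := one_add_exp_two_mul_I x
      rw [h, add_neg_cancel, eq_comm, mul_eq_zero, ofReal_eq_zero] at h0
      exact h0.elim (fun h ↦ by linarith [Real.cos_pos_of_mem_Ioo hx]) (exp_ne_zero _)
    simp only [circleMap_zero, ofReal_one, one_mul, ofReal_mul, ofReal_ofNat, invLogOneAddSub,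
      update_of_ne hne, log_one_add_exp_two_mul_I hx, one_div]
    ring_nf
  calc ∫ x in (-(π / 2))..(π / 2), (1 : ℂ) / (I * x - a + Real.log (2 * Real.cos x))
      = ∫ x in (-(π / 2))..(π / 2), invLogOneAddSub a (circleMap 0 1 (2 * x)) := by
        refine intervalIntegral.integral_congr_uIoo fun x hx ↦ hsubst x ?_
        rwa [uIoo_of_le (by linarith [Real.pi_pos])] at hx
    _ = (2 : ℝ)⁻¹ • ∫ θ in (-π)..π, invLogOneAddSub a (circleMap 0 1 θ) := by
        rw [intervalIntegral.integral_comp_mul_left (fun θ ↦ invLogOneAddSub a (circleMap 0 1 θ))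
          two_ne_zero]
        ring_nf
    _ = π * circleAverage (invLogOneAddSub a) 0 1 := by
        rw [circleAverage_eq_integral_add (-π),
          intervalIntegral.integral_comp_add_right (fun θ ↦ invLogOneAddSub a (circleMap 0 1 θ)),
          zero_add, show 2 * π + -π = π by ring, Complex.real_smul, Complex.real_smul]
        push_cast
        field_simp

theorem circleAverage_invLogOneAddSub_of_log_two_lt {a : ℝ} (h : Real.log 2 < a) :
    circleAverage (invLogOneAddSub a) 0 1 = -(a : ℂ)⁻¹ := by
  have hexp : 2 < Real.exp a := by rwa [← Real.log_lt_iff_lt_exp two_pos]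
  have hw : ∀ z : ℂ, ‖z‖ ≤ 1 → z ≠ exp (a : ℂ) - 1 := by
    rintro z hz rfl
    rw [norm_exp_ofReal_sub_one, abs_of_pos (by linarith)] at hz
    linarith
  rw [circleAverage_of_differentiable_on_off_countable countable_empty, invLogOneAddSub_zero]
  · intro z hz
    rw [abs_one, mem_closedBall_zero_iff] at hz
    exact (continuousAt_invLogOneAddSub hz (hw z hz)).continuousWithinAt
  · intro z hz
    rw [abs_one, sdiff_empty, mem_ball_zero_iff] at hz
    exact differentiableAt_invLogOneAddSub hz.le (ne_neg_one_of_norm_lt_one hz) (hw z hz.le)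

/-- At `w`, a simple zero of `log (1 + z) - a`, the value is the limit
`1 / (log (1 + ·))' w = 1 + w`. -/
noncomputable def subMulInvLogOneAddSub (a w : ℂ) : ℂ → ℂ :=
  update (fun z ↦ (z - w) * invLogOneAddSub a z) w (1 + w)

section SimplePole

variable {a w : ℂ}

theorem subMulInvLogOneAddSub_eventuallyEq {z : ℂ} (hz : z ≠ w) :
    subMulInvLogOneAddSub a w =ᶠ[𝓝 z] fun z ↦ (z - w) * invLogOneAddSub a z := by
  filter_upwards [isOpen_compl_singleton.mem_nhds hz] with y hy
  exact update_of_ne hy _ _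

theorem continuousAt_subMulInvLogOneAddSub_self (hw : ‖w‖ < 1) (hwa : log (1 + w) = a) :
    ContinuousAt (subMulInvLogOneAddSub a w) w := by
  have hslit := mem_slitPlane_of_norm_lt_one hw
  have hw1 := ne_neg_one_of_norm_lt_one hw
  have hφ : HasDerivAt (fun z ↦ Complex.log (1 + z) - a) (1 / (1 + w)) w :=
    (((hasDerivAt_id w).const_add 1).clog hslit).sub_const _
  have := hφ.continuousAt_update_sub_mul (sub_eq_zero.2 hwa)
    (by simp [slitPlane_ne_zero hslit])
    ((invLogOneAddSub_eventuallyEq hw1).filter_mono nhdsWithin_le_nhds)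
  rwa [one_div, inv_inv] at this

theorem continuousOn_subMulInvLogOneAddSub (hw : ‖w‖ < 1) (hwa : log (1 + w) = a) :
    ContinuousOn (subMulInvLogOneAddSub a w) (closedBall 0 1) := by
  intro z hz
  rw [mem_closedBall_zero_iff] at hz
  rcases eq_or_ne z w with rfl | hzw
  · exact (continuousAt_subMulInvLogOneAddSub_self hw hwa).continuousWithinAt
  · have hza : z ≠ exp a - 1 := by
      rwa [← eq_exp_sub_one_of_log_one_add_eq (ne_neg_one_of_norm_lt_one hw) hwa]
    exact ((continuousAt_id.sub continuousAt_const).mul (continuousAt_invLogOneAddSub hz hza)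
      ).congr (subMulInvLogOneAddSub_eventuallyEq hzw).symm |>.continuousWithinAt

theorem differentiableAt_subMulInvLogOneAddSub (hw : ‖w‖ < 1) (hwa : log (1 + w) = a) {z : ℂ}
    (hz : ‖z‖ < 1) (hzw : z ≠ w) : DifferentiableAt ℂ (subMulInvLogOneAddSub a w) z := by
  have hza : z ≠ exp a - 1 := by
    rwa [← eq_exp_sub_one_of_log_one_add_eq (ne_neg_one_of_norm_lt_one hw) hwa]
  exact ((differentiableAt_id.sub_const w).mul
    (differentiableAt_invLogOneAddSub hz.le (ne_neg_one_of_norm_lt_one hz) hza)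
    ).congr_of_eventuallyEq (subMulInvLogOneAddSub_eventuallyEq hzw)

theorem circleAverage_invLogOneAddSub_of_norm_lt_one (hw : ‖w‖ < 1) (hw0 : w ≠ 0)
    (hwa : log (1 + w) = a) :
    circleAverage (invLogOneAddSub a) 0 1 = (1 + w) / w - a⁻¹ := by
  calc circleAverage (invLogOneAddSub a) 0 1
      = circleAverage (fun z ↦ (z - w)⁻¹ • subMulInvLogOneAddSub a w z) 0 1 := by
        refine circleAverage_congr_sphere fun z hz ↦ ?_
        have hzw : z ≠ w := by
          rintro rfl
          simp_all
        simp [subMulInvLogOneAddSub, update_of_ne hzw, sub_ne_zero.2 hzw]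
    _ = (w - 0)⁻¹ • (subMulInvLogOneAddSub a w w - subMulInvLogOneAddSub a w 0) := by
        refine circleAverage_inv_sub_smul_of_differentiable_on_off_countable (countable_singleton w)
          ?_ ?_ (by simpa using hw) hw0
        · simpa using continuousOn_subMulInvLogOneAddSub hw hwa
        · rintro z ⟨hz, hzw⟩
          exact differentiableAt_subMulInvLogOneAddSub hw hwa (by simpa using hz) hzw
    _ = (1 + w) / w - a⁻¹ := by
        simp only [subMulInvLogOneAddSub, update_self, update_of_ne hw0.symm,
          invLogOneAddSub_zero, smul_eq_mul]
        field_simp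
        ring

end SimplePole

theorem circleAverage_invLogOneAddSub_of_lt_log_two {a : ℝ} (ha : a ≠ 0) (h : a < Real.log 2) :
    circleAverage (invLogOneAddSub a) 0 1 = exp (a : ℂ) / (exp (a : ℂ) - 1) - (a : ℂ)⁻¹ := by
  have hexp : Real.exp a < 2 := by rwa [← Real.lt_log_iff_exp_lt two_pos]
  have hw : ‖exp (a : ℂ) - 1‖ < 1 := by
    rw [norm_exp_ofReal_sub_one, abs_lt]
    constructor <;> linarith [Real.exp_pos a]
  have hw0 : exp (a : ℂ) - 1 ≠ 0 := by
    rwa [sub_ne_zero, ← ofReal_exp, ofReal_ne_one, Ne, Real.exp_eq_one_iff]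
  have hwa : log (1 + (exp (a : ℂ) - 1)) = a := by
    rw [add_sub_cancel, Complex.log_exp (by simp [Real.pi_pos]) (by simp [Real.pi_pos.le])]
  rw [circleAverage_invLogOneAddSub_of_norm_lt_one hw hw0 hwa, add_sub_cancel]

theorem stmt_2 (a : ℝ) (ha : a ≠ 0) (ha2 : a ≠ Real.log 2) :
    ∫ x in (-(π/2))..(π/2), (1 : ℂ) / (Complex.I * x - a + Real.log (2 * Real.cos x))
      = -(π : ℂ) / a + π * Complex.exp a / (Complex.exp a - 1) * (H (Real.log 2 - a) : ℂ) := by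
  rw [intervalIntegral_eq_pi_mul_circleAverage_invLogOneAddSub]
  rcases ha2.lt_or_gt with h | h
  · rw [circleAverage_invLogOneAddSub_of_lt_log_two ha h, H, if_pos (sub_pos.2 h)]
    push_cast
    ring
  · rw [circleAverage_invLogOneAddSub_of_log_two_lt h, H, if_neg (by linarith)]
    push_cast
    ring
end
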